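/- Fix η > 0 and set α = ηβ, and let x_{ηβ,β}^δ be the minimizer of Φ_{ηβ,β}. The function β ↦ ‖Kx_{ηβ,β}^δ − y^δ‖ is monotonically nondecreasing and continuous on (0, ∞). If lim_{β→0} ‖Kx_{ηβ,β}^δ − y^δ‖ < δ and ‖y^δ‖ > δ, then there exists at least one β* > 0 with ‖Kx_{ηβ*,β*}^δ − y^δ‖ = δ; moreover, if β* satisfies β*η < sup_{h ≠ 0} ⟨K*y^δ, h⟩/‖h‖_{ℓ¹}, then such β* is unique. -/

import Mathlib

noncomputable section

open Filter Topology

/-- `ℓ²(ℕ, ℝ)`. -/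
abbrev ltwo : Type := lp (fun _ : ℕ => ℝ) 2

/-- `x ∈ ℓ¹`. -/
def inL1 (x : ltwo) : Prop := Memℓp (fun i => x i) 1

/-- The `ℓ¹`-norm `‖x‖_{ℓ¹} = ∑ |xᵢ|` (junk value if `x ∉ ℓ¹`). -/
noncomputable def l1norm (x : ltwo) : ℝ := ∑' i, |x i|

/-- The elastic-net functional `Φ_{α,β}(x) = ½‖Kx − y‖² + α‖x‖₁ + (β/2)‖x‖₂²`,
real-valued on its effective domain `ℓ¹ ∩ ℓ²` (the convention `Φ = +∞` off `ℓ¹` is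
implemented by restricting all statements to `inL1`). -/
noncomputable def Phi {H : Type*} [NormedAddCommGroup H] [InnerProductSpace ℝ H]
    (K : ltwo →L[ℝ] H) (y : H) (α β : ℝ) (x : ltwo) : ℝ :=
  (1 / 2) * ‖K x - y‖ ^ 2 + α * l1norm x + (β / 2) * ‖x‖ ^ 2

/-- `x` is a minimizer of `Φ_{α,β}` over `ℓ²` (with the `+∞` convention off `ℓ¹`). -/
def IsMinimizer {H : Type*} [NormedAddCommGroup H] [InnerProductSpace ℝ H]
    (K : ltwo →L[ℝ] H) (y : H) (α β : ℝ) (x : ltwo) : Prop :=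
  inL1 x ∧ ∀ z : ltwo, inL1 z → Phi K y α β x ≤ Phi K y α β z

/-!
With `α = ηβ` the functional is `Φ_β = F + β R`, where `F x = ½‖Kx − y‖²` and
`R x = η‖x‖₁ + ½‖x‖²`. Comparing the minimizers for two parameters shows that `R(x_β)` is
nonincreasing and `F(x_β)` nondecreasing in `β`; since `Φ_β` is strongly convex with modulus
proportional to `β`, the same comparison bounds `‖x_β − x_{β₀}‖²` by a multiple of `|β − β₀|`,
so `β ↦ x_β` is continuous. As `β → ∞` the minimizers tend to `0`, so the discrepancy tends to
`‖y‖ > δ`, and the intermediate value theorem gives a solution. If two parameters give the same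
discrepancy, the minimizer for one is also a minimizer for the other; stationarity along the
ray through it, for both parameters, forces it to be `0`, and `0` is a minimizer only when
`⟨K*y, h⟩ ≤ ηβ‖h‖₁` for all `h`.
-/

open Set

section PenalizedFamily

variable {X : Type*} {S : Set X} {F R : X → ℝ} {x : ℝ → X}

def IsPenalizedMinimizerPath (S : Set X) (F R : X → ℝ) (x : ℝ → X) : Prop :=
  ∀ β > 0, x β ∈ S ∧ IsMinOn (fun z => F z + β * R z) S (x β)

theorem penalized_value_le (hx : IsPenalizedMinimizerPath S F R x) {β : ℝ} (hβ : 0 < β)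
    {z : X} (hz : z ∈ S) : F (x β) + β * R (x β) ≤ F z + β * R z :=
  (hx β hβ).2 hz

theorem penalty_antitoneOn (hx : IsPenalizedMinimizerPath S F R x) :
    AntitoneOn (fun β => R (x β)) (Ioi 0) := by
  intro β₁ (hβ₁ : 0 < β₁) β₂ (hβ₂ : 0 < β₂) hle
  rcases hle.eq_or_lt with rfl | hlt
  · rfl
  have h₁ := penalized_value_le hx hβ₁ (hx β₂ hβ₂).1
  have h₂ := penalized_value_le hx hβ₂ (hx β₁ hβ₁).1
  nlinarith

theorem fidelity_monotoneOn (hx : IsPenalizedMinimizerPath S F R x) :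
    MonotoneOn (fun β => F (x β)) (Ioi 0) := by
  intro β₁ (hβ₁ : 0 < β₁) β₂ (hβ₂ : 0 < β₂) hle
  have hR : R (x β₂) ≤ R (x β₁) := penalty_antitoneOn hx hβ₁ hβ₂ hle
  have h₁ := penalized_value_le hx hβ₁ (hx β₂ hβ₂).1
  show F (x β₁) ≤ F (x β₂)
  nlinarith

theorem isMinOn_of_fidelity_eq (hx : IsPenalizedMinimizerPath S F R x) {β₁ β₂ : ℝ}
    (hβ₁ : 0 < β₁) (hβ₂ : 0 < β₂) (hF : F (x β₁) = F (x β₂)) :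
    IsMinOn (fun z => F z + β₂ * R z) S (x β₁) := by
  have h₁ := penalized_value_le hx hβ₁ (hx β₂ hβ₂).1
  have h₂ := penalized_value_le hx hβ₂ (hx β₁ hβ₁).1
  have hR : R (x β₁) = R (x β₂) := by
    apply le_antisymm <;> nlinarith
  intro z hz
  simpa only [hF, hR] using (hx β₂ hβ₂).2 hz

theorem dist_sq_le_of_strongConvexity [PseudoMetricSpace X]
    (hx : IsPenalizedMinimizerPath S F R x) {c : ℝ}
    (hsc : ∀ β > 0, ∀ z ∈ S, c * β * dist z (x β) ^ 2 ≤ F z + β * R z - (F (x β) + β * R (x β)))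
    {β₀ β : ℝ} (hβ₀ : 0 < β₀) (hβ : 0 < β) :
    c * β₀ * dist (x β) (x β₀) ^ 2 ≤ (β₀ - β) * (R (x β) - R (x β₀)) := by
  have h₀ := hsc β₀ hβ₀ (x β) (hx β hβ).1
  have h := penalized_value_le hx hβ (hx β₀ hβ₀).1
  linarith

theorem continuousOn_of_strongConvexity [PseudoMetricSpace X]
    (hx : IsPenalizedMinimizerPath S F R x) {c : ℝ} (hc : 0 < c)
    (hsc : ∀ β > 0, ∀ z ∈ S, c * β * dist z (x β) ^ 2 ≤ F z + β * R z - (F (x β) + β * R (x β))) :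
    ContinuousOn x (Ioi 0) := by
  refine continuousOn_of_forall_continuousAt fun β₀ (hβ₀ : 0 < β₀) => ?_
  have hR : ∀ β ∈ Icc (β₀ / 2) (2 * β₀),
      R (x (2 * β₀)) ≤ R (x β) ∧ R (x β) ≤ R (x (β₀ / 2)) := by
    rintro β ⟨hlo, hhi⟩
    have hβ : β ∈ Ioi 0 := lt_of_lt_of_le (half_pos hβ₀) hlo
    exact ⟨penalty_antitoneOn hx hβ (by simp [hβ₀]) hhi,
      penalty_antitoneOn hx (by simp [hβ₀]) hβ hlo⟩
  set M := R (x (β₀ / 2)) - R (x (2 * β₀))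
  have hbound : ∀ β ∈ Icc (β₀ / 2) (2 * β₀),
      dist (x β) (x β₀) ≤ √(M / (c * β₀) * |β - β₀|) := by
    intro β hβ
    obtain ⟨h₁, h₂⟩ := hR β hβ
    obtain ⟨h₃, h₄⟩ := hR β₀ ⟨by linarith, by linarith⟩
    have hsq := dist_sq_le_of_strongConvexity hx hsc hβ₀ (by linarith [hβ.1] : 0 < β)
    have hprod : (β₀ - β) * (R (x β) - R (x β₀)) ≤ |β - β₀| * M :=
      calc (β₀ - β) * (R (x β) - R (x β₀))
          ≤ |β₀ - β| * |R (x β) - R (x β₀)| := by rw [← abs_mul]; exact le_abs_self _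
        _ ≤ |β - β₀| * M := by
          rw [abs_sub_comm]
          gcongr
          exact abs_sub_le_iff.2 ⟨by linarith, by linarith⟩
    rw [← abs_of_nonneg dist_nonneg]
    apply Real.abs_le_sqrt
    rw [div_mul_eq_mul_div, le_div_iff₀ (by positivity)]
    linarith
  rw [ContinuousAt, tendsto_iff_dist_tendsto_zero]
  refine squeeze_zero' (Eventually.of_forall fun _ => dist_nonneg)
    (mem_of_superset (Icc_mem_nhds (by linarith) (by linarith)) hbound) ?_
  have hcont : Continuous fun β => √(M / (c * β₀) * |β - β₀|) := by fun_prop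
  simpa using hcont.tendsto β₀

end PenalizedFamily

theorem norm_smul_half_add_sq {E : Type*} [NormedAddCommGroup E] [InnerProductSpace ℝ E]
    (u v : E) : ‖(2⁻¹ : ℝ) • (u + v)‖ ^ 2 = ‖u‖ ^ 2 / 2 + ‖v‖ ^ 2 / 2 - ‖u - v‖ ^ 2 / 4 := by
  rw [norm_smul, mul_pow, norm_add_sq_real, norm_sub_sq_real]
  norm_num
  ring

theorem two_mul_add_eq_zero_of_forall_le {a b : ℝ}
    (h : ∀ t > 0, a + b ≤ a * t ^ 2 + b * t) : 2 * a + b = 0 := by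
  have hmin : IsLocalMin (fun t => a * t ^ 2 + b * t) 1 :=
    mem_of_superset (Ioi_mem_nhds one_pos) fun t ht => by simpa using h t ht
  have hderiv : HasDerivAt (fun t => a * t ^ 2 + b * t) (a * (2 * 1 ^ 1) + b * 1) 1 :=
    ((hasDerivAt_pow 2 (1 : ℝ)).const_mul a).add ((hasDerivAt_id (1 : ℝ)).const_mul b)
  simpa [mul_comm] using hmin.hasDerivAt_eq_zero hderiv

theorem nonneg_of_forall_quadratic_nonneg {a b : ℝ}
    (h : ∀ t > 0, 0 ≤ a * t ^ 2 + b * t) : 0 ≤ b := by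
  have hlim : Tendsto (fun t => a * t + b) (𝓝[>] 0) (𝓝 b) := by
    have hcont : Continuous fun t : ℝ => a * t + b := by fun_prop
    simpa using hcont.continuousWithinAt.tendsto (x := 0) (s := Ioi 0)
  refine ge_of_tendsto hlim ?_
  filter_upwards [self_mem_nhdsWithin] with t (ht : 0 < t)
  have hq : 0 ≤ t * (a * t + b) := by linarith [h t ht]
  exact (mul_nonneg_iff_of_pos_left ht).1 hq

theorem inL1_zero : inL1 0 :=
  zero_memℓp

theorem inL1_add {x z : ltwo} (hx : inL1 x) (hz : inL1 z) : inL1 (x + z) := by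
  unfold inL1 at *
  rw [lp.coeFn_add]
  exact hx.add hz

theorem inL1_smul {x : ltwo} (hx : inL1 x) (c : ℝ) : inL1 (c • x) := by
  unfold inL1 at *
  rw [lp.coeFn_smul]
  exact hx.const_smul c

theorem l1norm_nonneg (x : ltwo) : 0 ≤ l1norm x :=
  tsum_nonneg fun _ => abs_nonneg _

theorem l1norm_zero : l1norm 0 = 0 := by
  simp [l1norm]

theorem l1norm_smul (c : ℝ) (x : ltwo) : l1norm (c • x) = |c| * l1norm x := by
  simp only [l1norm, lp.coeFn_smul, Pi.smul_apply, smul_eq_mul, abs_mul, tsum_mul_left]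

theorem summable_abs_of_inL1 {x : ltwo} (hx : inL1 x) : Summable fun i => |x i| := by
  simpa using hx.summable (p := 1) one_pos

theorem l1norm_add_le {x z : ltwo} (hx : inL1 x) (hz : inL1 z) :
    l1norm (x + z) ≤ l1norm x + l1norm z := by
  have hs := (summable_abs_of_inL1 hx).add (summable_abs_of_inL1 hz)
  have hle : ∀ i, |(x + z) i| ≤ |x i| + |z i| := fun i => abs_add_le (x i) (z i)
  calc l1norm (x + z) ≤ ∑' i, (|x i| + |z i|) :=
        (hs.of_nonneg_of_le (fun _ => abs_nonneg _) hle).tsum_le_tsum hle hs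
    _ = l1norm x + l1norm z := (summable_abs_of_inL1 hx).tsum_add (summable_abs_of_inL1 hz)

section ElasticNet

variable {H : Type*} [NormedAddCommGroup H] [InnerProductSpace ℝ H] {K : ltwo →L[ℝ] H} {y : H}
  {α β : ℝ}

theorem IsMinimizer.sq_norm_sub_le {x z : ltwo} (hα : 0 ≤ α) (hx : IsMinimizer K y α β x)
    (hz : inL1 z) : β / 4 * ‖z - x‖ ^ 2 ≤ Phi K y α β z - Phi K y α β x := by
  set m : ltwo := (2⁻¹ : ℝ) • (x + z)
  have hle := hx.2 m (inL1_smul (inL1_add hx.1 hz) _)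
  have hKm : K m - y = (2⁻¹ : ℝ) • ((K x - y) + (K z - y)) := by
    simp only [m, map_smul, map_add]
    module
  have hfid : ‖K m - y‖ ^ 2 ≤ ‖K x - y‖ ^ 2 / 2 + ‖K z - y‖ ^ 2 / 2 := by
    rw [hKm, norm_smul_half_add_sq]
    linarith [sq_nonneg ‖K x - y - (K z - y)‖]
  have hnorm : ‖m‖ ^ 2 = ‖x‖ ^ 2 / 2 + ‖z‖ ^ 2 / 2 - ‖z - x‖ ^ 2 / 4 := by
    rw [norm_smul_half_add_sq, norm_sub_rev]
  have hl1 : l1norm m ≤ l1norm x / 2 + l1norm z / 2 := by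
    have := l1norm_add_le hx.1 hz
    rw [l1norm_smul, abs_of_pos (by norm_num)]
    linarith
  unfold Phi at hle ⊢
  rw [hnorm] at hle
  nlinarith [mul_le_mul_of_nonneg_left hl1 hα]

theorem Phi_smul (x : ltwo) {t : ℝ} (ht : 0 ≤ t) :
    Phi K y α β (t • x) = (‖K x‖ ^ 2 + β * ‖x‖ ^ 2) / 2 * t ^ 2
      + (α * l1norm x - inner ℝ (K x) y) * t + ‖y‖ ^ 2 / 2 := by
  rw [Phi, map_smul, norm_sub_sq_real, norm_smul, norm_smul, real_inner_smul_left, l1norm_smul,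
    Real.norm_eq_abs, abs_of_nonneg ht]
  ring

theorem IsMinimizer.stationary {x : ltwo} (hx : IsMinimizer K y α β x) :
    ‖K x‖ ^ 2 + β * ‖x‖ ^ 2 + α * l1norm x = inner ℝ (K x) y := by
  have h := two_mul_add_eq_zero_of_forall_le (a := (‖K x‖ ^ 2 + β * ‖x‖ ^ 2) / 2)
    (b := α * l1norm x - inner ℝ (K x) y) fun t (ht : 0 < t) => by
      have hle := hx.2 (t • x) (inL1_smul hx.1 t)
      rw [← one_smul ℝ x, Phi_smul _ zero_le_one, one_smul, Phi_smul _ ht.le] at hle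
      linarith
  linarith

theorem IsMinimizer.mul_sq_norm_le {x : ltwo} (hα : 0 ≤ α) (hx : IsMinimizer K y α β x) :
    β * ‖x‖ ^ 2 ≤ ‖y‖ ^ 2 := by
  have hle := hx.2 0 inL1_zero
  simp only [Phi, map_zero, zero_sub, norm_neg, l1norm_zero, norm_zero] at hle
  nlinarith [sq_nonneg ‖K x - y‖, mul_nonneg hα (l1norm_nonneg x)]

theorem inner_le_of_isMinimizer_zero (h0 : IsMinimizer K y α β 0) {h : ltwo} (hh : inL1 h) :
    inner ℝ (K h) y ≤ α * l1norm h := by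
  have hslope := nonneg_of_forall_quadratic_nonneg (a := (‖K h‖ ^ 2 + β * ‖h‖ ^ 2) / 2)
    (b := α * l1norm h - inner ℝ (K h) y) fun t (ht : 0 < t) => by
      have hle := h0.2 (t • h) (inL1_smul hh t)
      rw [← zero_smul ℝ h, Phi_smul _ le_rfl, Phi_smul _ ht.le] at hle
      linarith
  linarith

theorem inner_adjoint_div_l1norm_le [CompleteSpace H] (hα : 0 ≤ α)
    (h0 : IsMinimizer K y α β 0) {h : ltwo} (hh : inL1 h) :
    inner ℝ (ContinuousLinearMap.adjoint K y) h / l1norm h ≤ α := by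
  rw [ContinuousLinearMap.adjoint_inner_left, real_inner_comm]
  rcases (l1norm_nonneg h).eq_or_lt with h0norm | hpos
  · rwa [← h0norm, div_zero]
  · rw [div_le_iff₀ hpos]
    exact inner_le_of_isMinimizer_zero h0 hh

variable {η : ℝ} {xmin : ℝ → ltwo}

theorem Phi_mul_eq (β : ℝ) (z : ltwo) :
    Phi K y (η * β) β z = ‖K z - y‖ ^ 2 / 2 + β * (η * l1norm z + ‖z‖ ^ 2 / 2) := by
  unfold Phi
  ring

theorem isMinimizer_mul_iff {x : ltwo} :
    IsMinimizer K y (η * β) β x ↔ x ∈ {z | inL1 z} ∧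
      IsMinOn (fun z => ‖K z - y‖ ^ 2 / 2 + β * (η * l1norm z + ‖z‖ ^ 2 / 2)) {z | inL1 z} x := by
  simp only [IsMinimizer, isMinOn_iff, Phi_mul_eq]
  rfl

theorem isPenalizedMinimizerPath_of_isMinimizer
    (hxmin : ∀ β : ℝ, 0 < β → IsMinimizer K y (η * β) β (xmin β)) :
    IsPenalizedMinimizerPath {z | inL1 z} (fun z => ‖K z - y‖ ^ 2 / 2)
      (fun z => η * l1norm z + ‖z‖ ^ 2 / 2) xmin :=
  fun β hβ => isMinimizer_mul_iff.1 (hxmin β hβ)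

theorem discrepancy_monotoneOn (hxmin : ∀ β : ℝ, 0 < β → IsMinimizer K y (η * β) β (xmin β)) :
    MonotoneOn (fun β => ‖K (xmin β) - y‖) (Ioi 0) := by
  intro β₁ hβ₁ β₂ hβ₂ hle
  have hsq := fidelity_monotoneOn (isPenalizedMinimizerPath_of_isMinimizer hxmin) hβ₁ hβ₂ hle
  simp only at hsq ⊢
  nlinarith [norm_nonneg (K (xmin β₁) - y), norm_nonneg (K (xmin β₂) - y)]

theorem continuousOn_minimizer (hη : 0 ≤ η)
    (hxmin : ∀ β : ℝ, 0 < β → IsMinimizer K y (η * β) β (xmin β)) :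
    ContinuousOn xmin (Ioi 0) := by
  refine continuousOn_of_strongConvexity (isPenalizedMinimizerPath_of_isMinimizer hxmin)
    (by norm_num : (0 : ℝ) < 1 / 4) fun β hβ z hz => ?_
  have h := (hxmin β hβ).sq_norm_sub_le (mul_nonneg hη hβ.le) hz
  rw [Phi_mul_eq, Phi_mul_eq] at h
  rw [dist_eq_norm]
  linarith

theorem tendsto_minimizer_atTop (hη : 0 ≤ η)
    (hxmin : ∀ β : ℝ, 0 < β → IsMinimizer K y (η * β) β (xmin β)) :
    Tendsto xmin atTop (𝓝 0) := by
  rw [tendsto_zero_iff_norm_tendsto_zero]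
  have hlim : Tendsto (fun β => √(‖y‖ ^ 2 / β)) atTop (𝓝 0) := by
    have := ((tendsto_const_nhds (x := ‖y‖ ^ 2)).div_atTop tendsto_id).sqrt
    rwa [Real.sqrt_zero] at this
  refine squeeze_zero' (Eventually.of_forall fun _ => norm_nonneg _) ?_ hlim
  filter_upwards [Ioi_mem_atTop 0] with β (hβ : 0 < β)
  rw [← abs_norm]
  apply Real.abs_le_sqrt
  rw [le_div_iff₀ hβ, mul_comm]
  exact (hxmin β hβ).mul_sq_norm_le (mul_nonneg hη hβ.le)

theorem minimizer_eq_zero_of_discrepancy_eq (hη : 0 ≤ η)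
    (hxmin : ∀ β : ℝ, 0 < β → IsMinimizer K y (η * β) β (xmin β)) {β₁ β₂ : ℝ} (hβ₁ : 0 < β₁)
    (hβ₂ : 0 < β₂) (hne : β₁ ≠ β₂) (h : ‖K (xmin β₁) - y‖ = ‖K (xmin β₂) - y‖) :
    xmin β₁ = 0 := by
  have hmin₂ : IsMinimizer K y (η * β₂) β₂ (xmin β₁) :=
    isMinimizer_mul_iff.2 ⟨(hxmin β₁ hβ₁).1, isMinOn_of_fidelity_eq
      (isPenalizedMinimizerPath_of_isMinimizer hxmin) hβ₁ hβ₂ (by simp only [h])⟩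
  have h₁ := (hxmin β₁ hβ₁).stationary
  have h₂ := hmin₂.stationary
  have hpen : (β₁ - β₂) * (‖xmin β₁‖ ^ 2 + η * l1norm (xmin β₁)) = 0 := by
    linear_combination h₁ - h₂
  have hsq : ‖xmin β₁‖ ^ 2 = 0 := by
    have := (mul_eq_zero.1 hpen).resolve_left (sub_ne_zero.2 hne)
    nlinarith [mul_nonneg hη (l1norm_nonneg (xmin β₁)), sq_nonneg ‖xmin β₁‖]
  simpa using hsq

end ElasticNet

theorem elasticNet_discrepancy_principle_existence_uniqueness_general
    {H : Type*} [NormedAddCommGroup H] [InnerProductSpace ℝ H] [CompleteSpace H]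
    (K : ltwo →L[ℝ] H) (ydelta : H) (δ : ℝ)
    (η : ℝ) (hη : 0 < η)
    (xmin : ℝ → ltwo)
    (hxmin : ∀ β : ℝ, 0 < β → IsMinimizer K ydelta (η * β) β (xmin β))
    (L : ℝ)
    (hL : Tendsto (fun β => ‖K (xmin β) - ydelta‖) (nhdsWithin 0 (Set.Ioi 0)) (nhds L))
    (hLδ : L < δ) (hy : δ < ‖ydelta‖) :
    MonotoneOn (fun β => ‖K (xmin β) - ydelta‖) (Set.Ioi 0) ∧
    ContinuousOn (fun β => ‖K (xmin β) - ydelta‖) (Set.Ioi 0) ∧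
    (∃ βstar > (0 : ℝ), ‖K (xmin βstar) - ydelta‖ = δ) ∧
    (∀ βstar : ℝ, 0 < βstar → ‖K (xmin βstar) - ydelta‖ = δ →
      (∃ h : ltwo, inL1 h ∧ h ≠ 0 ∧
        βstar * η <
          (inner ℝ (ContinuousLinearMap.adjoint K ydelta) h : ℝ) / l1norm h) →
      ∀ β' : ℝ, 0 < β' → ‖K (xmin β') - ydelta‖ = δ → β' = βstar) := by
  have hres : Continuous fun x => ‖K x - ydelta‖ := by fun_prop
  have hcont : ContinuousOn (fun β => ‖K (xmin β) - ydelta‖) (Ioi 0) :=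
    hres.comp_continuousOn (continuousOn_minimizer hη.le hxmin)
  have hlim : Tendsto (fun β => ‖K (xmin β) - ydelta‖) atTop (𝓝 ‖ydelta‖) := by
    simpa [Function.comp_def] using (hres.tendsto 0).comp (tendsto_minimizer_atTop hη.le hxmin)
  refine ⟨discrepancy_monotoneOn hxmin, hcont, ?_, ?_⟩
  · obtain ⟨β, hβ, hβδ⟩ := isPreconnected_Ioi.intermediate_value_Ioo (l₁ := 𝓝[>] 0) inf_le_right
      (le_principal_iff.2 (Ioi_mem_atTop 0)) hcont hL hlim ⟨hLδ, hy⟩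
    exact ⟨β, hβ, hβδ⟩
  · rintro βstar hβstar hδstar ⟨h, hh, -, hlt⟩ β' hβ' hδ'
    by_contra hne
    have h0 := minimizer_eq_zero_of_discrepancy_eq hη.le hxmin hβstar hβ' (Ne.symm hne)
      (hδstar.trans hδ'.symm)
    have hle := inner_adjoint_div_l1norm_le (mul_nonneg hη.le hβstar.le)
      (h0 ▸ hxmin βstar hβstar) hh
    linarith

/-- The discrepancy principle: with `α = ηβ`, the discrepancy
`β ↦ ‖Kx_{ηβ,β}^δ − y^δ‖` is nondecreasing and continuous on `(0,∞)`; if its limit as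
`β → 0⁺` is `< δ` and `‖y^δ‖ > δ`, the equation `‖Kx_{ηβ,β}^δ − y^δ‖ = δ` has at least
one solution `β* > 0`, which is unique whenever
`β*η < sup_{h ≠ 0} ⟨K*y^δ, h⟩/‖h‖₁`. -/
theorem elasticNet_discrepancy_principle_existence_uniqueness
    {H : Type*} [NormedAddCommGroup H] [InnerProductSpace ℝ H] [CompleteSpace H]
    (K : ltwo →L[ℝ] H) (ydelta : H) (δ : ℝ) (hδ : 0 < δ)
    (η : ℝ) (hη : 0 < η)
    (xmin : ℝ → ltwo)
    (hxmin : ∀ β : ℝ, 0 < β → IsMinimizer K ydelta (η * β) β (xmin β))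
    (L : ℝ)
    (hL : Tendsto (fun β => ‖K (xmin β) - ydelta‖) (nhdsWithin 0 (Set.Ioi 0)) (nhds L))
    (hLδ : L < δ) (hy : δ < ‖ydelta‖) :
    MonotoneOn (fun β => ‖K (xmin β) - ydelta‖) (Set.Ioi 0) ∧
    ContinuousOn (fun β => ‖K (xmin β) - ydelta‖) (Set.Ioi 0) ∧
    (∃ βstar > (0 : ℝ), ‖K (xmin βstar) - ydelta‖ = δ) ∧
    (∀ βstar : ℝ, 0 < βstar → ‖K (xmin βstar) - ydelta‖ = δ →
      (∃ h : ltwo, inL1 h ∧ h ≠ 0 ∧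
        βstar * η <
          (inner ℝ (ContinuousLinearMap.adjoint K ydelta) h : ℝ) / l1norm h) →
      ∀ β' : ℝ, 0 < β' → ‖K (xmin β') - ydelta‖ = δ → β' = βstar) :=
  elasticNet_discrepancy_principle_existence_uniqueness_general K ydelta δ η hη xmin hxmin L hL hLδ
    hy
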